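/- arXiv:2604.22941 — 6 statements merged into one kernel-verified Lean document; each statement's English description precedes it below -/
import Mathlib

section
/- Let (M, m) be a measure space which is the union of a sequence (V_i)_{i∈ℕ} of pairwise disjoint measurable sets satisfying m(V_i) ≤ C·2^{-i} for all i ∈ ℕ, for some constant C > 0. Let α > 0 and c > 0, and let f : M → [0,∞) be a measurable function such that f(x) ≥ c·2^{-α i} for every i ∈ ℕ and every x ∈ V_i. Set q := 2α + 1. Then for every p ∈ [1,∞) there exists a constant K > 0, depending only on C, c, α and p, such that for every measurable function v : M → [0,∞): (∫_M v^p dm)^{1/p} ≤ K · (∫_M v^{p q} f dm)^{1/(p q)}. -/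
open MeasureTheory ENNReal

/-- Weighted comparison `‖v‖_{L^p(m)} ≲ ‖v‖_{L^{pq}(f·m)}` on a measure space
covered by pairwise disjoint pieces `V i` with `m (V i) ≤ C 2^{-i}` and
`f ≥ c 2^{-α i}` on `V i`, with `q = 2α + 1`. -/
theorem stmt0 {M : Type*} [MeasurableSpace M] (m : Measure M)
    (V : ℕ → Set M) (hVmeas : ∀ i, MeasurableSet (V i))
    (hVdisj : Pairwise (Function.onFun Disjoint V))
    (hVcover : (⋃ i, V i) = Set.univ)
    (C c α : ℝ) (hC : 0 < C) (hc : 0 < c) (hα : 0 < α)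
    (f : M → ℝ≥0∞) (hf : Measurable f)
    (hflb : ∀ i : ℕ, ∀ x ∈ V i, ENNReal.ofReal (c * 2 ^ (-(α * i))) ≤ f x)
    (hm : ∀ i : ℕ, m (V i) ≤ ENNReal.ofReal (C * 2 ^ (-(i : ℝ))))
    (p : ℝ) (hp : 1 ≤ p) :
    ∃ K : ℝ, 0 < K ∧ ∀ v : M → ℝ≥0∞, Measurable v →
      (∫⁻ x, v x ^ p ∂m) ^ (1 / p) ≤
        ENNReal.ofReal K *
          (∫⁻ x, v x ^ (p * (2 * α + 1)) * f x ∂m) ^ (1 / (p * (2 * α + 1))) := by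
  have hp0 : 0 < p := lt_of_lt_of_le one_pos hp
  set q : ℝ := 2 * α + 1 with hqdef
  have hq1 : 1 < q := by rw [hqdef]; linarith
  have hq0 : 0 < q := lt_trans one_pos hq1
  set q' : ℝ := q / (q - 1) with hq'def
  have hq'0 : 0 < q' := div_pos hq0 (by linarith)
  have hpq : q.HolderConjugate q' :=
    (Real.holderConjugate_iff_eq_conjExponent hq1).mpr hq'def
  have hq'inv : 1 / q' = (q - 1) / q := by rw [hq'def, one_div, inv_div]
  -- geometric ratio and constants
  set r : ℝ := (2 : ℝ) ^ (-(α / q)) with hrdef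
  have hr0 : 0 < r := Real.rpow_pos_of_pos two_pos _
  have hr1 : r < 1 := by
    rw [hrdef]
    apply Real.rpow_lt_one_of_one_lt_of_neg one_lt_two
    simp only [neg_neg, neg_lt_zero]
    positivity
  set D : ℝ := c ^ (-(1 / q)) * C ^ (1 / q') with hDdef
  have hD0 : 0 < D :=
    mul_pos (Real.rpow_pos_of_pos hc _) (Real.rpow_pos_of_pos hC _)
  set Kp : ℝ := D * (1 - r)⁻¹ with hKpdef
  have hKp0 : 0 < Kp := mul_pos hD0 (inv_pos.mpr (by linarith))
  refine ⟨Kp ^ (1 / p), Real.rpow_pos_of_pos hKp0 _, ?_⟩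
  intro v hv
  set A : ℝ≥0∞ := ∫⁻ x, v x ^ (p * q) * f x ∂m with hAdef
  -- main inequality at power p
  have main : (∫⁻ x, v x ^ p ∂m) ≤ ENNReal.ofReal Kp * A ^ (1 / q) := by
    have hsum : (∫⁻ x, v x ^ p ∂m) = ∑' i, ∫⁻ x in V i, v x ^ p ∂m := by
      rw [← lintegral_iUnion hVmeas hVdisj, hVcover, Measure.restrict_univ]
    rw [hsum]
    have key : ∀ i : ℕ, (∫⁻ x in V i, v x ^ p ∂m)
        ≤ ENNReal.ofReal (D * r ^ i) * A ^ (1 / q) := by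
      intro i
      set ε : ℝ := c * 2 ^ (-(α * i)) with hεdef
      have hε0 : 0 < ε := by rw [hεdef]; positivity
      -- Step 2: ∫_{V i} v^{pq} ≤ (ofReal ε)⁻¹ * A
      have step2 : (∫⁻ x in V i, v x ^ (p * q) ∂m) ≤ (ENNReal.ofReal ε)⁻¹ * A := by
        have h1 : ENNReal.ofReal ε * ∫⁻ x in V i, v x ^ (p * q) ∂m ≤ A := by
          rw [← lintegral_const_mul _ (hv.pow_const _)]
          calc ∫⁻ x in V i, ENNReal.ofReal ε * v x ^ (p * q) ∂m
              ≤ ∫⁻ x in V i, v x ^ (p * q) * f x ∂m := by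
                apply setLIntegral_mono ((hv.pow_const _).mul hf)
                intro x hx
                calc ENNReal.ofReal ε * v x ^ (p * q)
                    ≤ f x * v x ^ (p * q) := mul_le_mul_left (hflb i x hx) _
                  _ = v x ^ (p * q) * f x := mul_comm _ _
            _ ≤ A := setLIntegral_le_lintegral _ _
        have hεne : ENNReal.ofReal ε ≠ 0 := by
          simp only [ne_eq, ENNReal.ofReal_eq_zero, not_le]
          exact hε0
        calc (∫⁻ x in V i, v x ^ (p * q) ∂m)
            = (ENNReal.ofReal ε)⁻¹ * (ENNReal.ofReal ε * ∫⁻ x in V i, v x ^ (p * q) ∂m) := by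
              rw [← mul_assoc, ENNReal.inv_mul_cancel hεne ENNReal.ofReal_ne_top, one_mul]
          _ ≤ (ENNReal.ofReal ε)⁻¹ * A := mul_le_mul_right h1 _
      -- Step 1: Hölder on V i with exponents q, q'
      have holder : (∫⁻ x in V i, v x ^ p ∂m)
          ≤ (∫⁻ x in V i, v x ^ (p * q) ∂m) ^ (1 / q) * (m (V i)) ^ (1 / q') := by
        have := ENNReal.lintegral_mul_le_Lp_mul_Lq (m.restrict (V i)) hpq
          (f := fun x => v x ^ p) (g := fun _ => 1)
          ((hv.pow_const _).aemeasurable) aemeasurable_const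
        simpa [← ENNReal.rpow_mul, Measure.restrict_apply_univ] using this
      -- real identity for the constants
      have hid : (ε⁻¹) ^ (1 / q) * (C * 2 ^ (-(i : ℝ))) ^ (1 / q') = D * r ^ i := by
        have h2i : ∀ a b : ℝ, ((2 : ℝ) ^ a) ^ b = (2 : ℝ) ^ (a * b) :=
          fun a b => (Real.rpow_mul two_pos.le a b).symm
        have hexp : α * (i : ℝ) * (1 / q) + -(i : ℝ) * (1 / q') = -(α / q) * (i : ℝ) := by
          rw [hq'inv, hqdef]
          have h1 : (2 : ℝ) * α + 1 ≠ 0 := by linarith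
          field_simp
          ring
        rw [hεdef, mul_inv, Real.mul_rpow (by positivity) (by positivity),
          Real.mul_rpow hC.le (by positivity),
          ← Real.rpow_neg two_pos.le, neg_neg, h2i, h2i,
          Real.inv_rpow hc.le, hDdef, Real.rpow_neg hc.le,
          ← Real.rpow_natCast r i, hrdef, h2i,
          mul_mul_mul_comm, ← Real.rpow_add two_pos, hexp]
      -- combine
      calc (∫⁻ x in V i, v x ^ p ∂m)
          ≤ ((ENNReal.ofReal ε)⁻¹ * A) ^ (1 / q)
              * (ENNReal.ofReal (C * 2 ^ (-(i : ℝ)))) ^ (1 / q') := by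
            refine le_trans holder (mul_le_mul' ?_ ?_)
            · exact ENNReal.rpow_le_rpow step2 (by positivity)
            · exact ENNReal.rpow_le_rpow (hm i) (by positivity)
        _ = ENNReal.ofReal (D * r ^ i) * A ^ (1 / q) := by
            rw [ENNReal.mul_rpow_of_nonneg _ _ (by positivity : (0:ℝ) ≤ 1 / q),
              ← ENNReal.ofReal_inv_of_pos hε0,
              ENNReal.ofReal_rpow_of_pos (inv_pos.mpr hε0),
              ENNReal.ofReal_rpow_of_pos (by positivity),
              mul_right_comm, ← ENNReal.ofReal_mul (by positivity), hid]
    have hsummable : Summable (fun i : ℕ => D * r ^ i) :=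
      (summable_geometric_of_lt_one hr0.le hr1).mul_left D
    calc ∑' i, ∫⁻ x in V i, v x ^ p ∂m
        ≤ ∑' i, ENNReal.ofReal (D * r ^ i) * A ^ (1 / q) := ENNReal.tsum_le_tsum key
      _ = (∑' i, ENNReal.ofReal (D * r ^ i)) * A ^ (1 / q) := ENNReal.tsum_mul_right
      _ = ENNReal.ofReal Kp * A ^ (1 / q) := by
          rw [← ENNReal.ofReal_tsum_of_nonneg (fun n => by positivity) hsummable,
            tsum_mul_left, tsum_geometric_of_lt_one hr0.le hr1, ← hKpdef]
  -- conclude by taking p-th roots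
  have hq'exp : 1 / q * (1 / p) = 1 / (p * q) := by
    field_simp
  calc (∫⁻ x, v x ^ p ∂m) ^ (1 / p)
      ≤ (ENNReal.ofReal Kp * A ^ (1 / q)) ^ (1 / p) :=
        ENNReal.rpow_le_rpow main (by positivity)
    _ = ENNReal.ofReal (Kp ^ (1 / p)) * A ^ (1 / (p * q)) := by
        rw [ENNReal.mul_rpow_of_nonneg _ _ (by positivity : (0:ℝ) ≤ 1 / p),
          ← ENNReal.rpow_mul, hq'exp, ENNReal.ofReal_rpow_of_pos hKp0]
end

section
/- Let L ≥ 0, let θ : ℝ^d → ℝ be an L-Lipschitz function, and let S ⊆ ℝ^d be a nonempty set. Write Γ_{θ|S} := {(s, θ(s)) : s ∈ S} ⊆ ℝ^d × ℝ, where ℝ^d × ℝ carries the Euclidean distance. Then for every x̃ ∈ ℝ^d and every x_n ∈ ℝ: (1/(2+L)) · ( |x_n − θ(x̃)| + dist(x̃, S) ) ≤ dist( (x̃, x_n), Γ_{θ|S} ) ≤ (2+L) · ( |x_n − θ(x̃)| + dist(x̃, S) ). -/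
open Metric

/-- For an `L`-Lipschitz function `θ : ℝ^d → ℝ` and a nonempty set `S ⊆ ℝ^d`, the
Euclidean distance of a point `(xt, xn)` to the partial graph `Γ_{θ|S}` is comparable,
with constant `2 + L`, to `|xn − θ(xt)| + dist(xt, S)`. -/
theorem stmt2 (d : ℕ) (L : ℝ) (hL : 0 ≤ L)
    (θ : EuclideanSpace ℝ (Fin d) → ℝ) (hθ : LipschitzWith L.toNNReal θ)
    (S : Set (EuclideanSpace ℝ (Fin d))) (hS : S.Nonempty)
    (xt : EuclideanSpace ℝ (Fin d)) (xn : ℝ) :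
    (1 / (2 + L)) * (|xn - θ xt| + infDist xt S) ≤
      infDist ((WithLp.equiv 2 (EuclideanSpace ℝ (Fin d) × ℝ)).symm (xt, xn))
        ((fun s => (WithLp.equiv 2 (EuclideanSpace ℝ (Fin d) × ℝ)).symm (s, θ s)) '' S) ∧
    infDist ((WithLp.equiv 2 (EuclideanSpace ℝ (Fin d) × ℝ)).symm (xt, xn))
        ((fun s => (WithLp.equiv 2 (EuclideanSpace ℝ (Fin d) × ℝ)).symm (s, θ s)) '' S) ≤
      (2 + L) * (|xn - θ xt| + infDist xt S) := by
  set x : WithLp 2 (EuclideanSpace ℝ (Fin d) × ℝ) :=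
    (WithLp.equiv 2 (EuclideanSpace ℝ (Fin d) × ℝ)).symm (xt, xn) with hx
  set f : EuclideanSpace ℝ (Fin d) → WithLp 2 (EuclideanSpace ℝ (Fin d) × ℝ) :=
    fun s => (WithLp.equiv 2 (EuclideanSpace ℝ (Fin d) × ℝ)).symm (s, θ s) with hf
  have hpos : (0:ℝ) < 2 + L := by linarith
  have hdist : ∀ s, dist x (f s) = Real.sqrt (dist xt s ^ 2 + dist xn (θ s) ^ 2) := by
    intro s
    rw [WithLp.prod_dist_eq_of_L2]
    rfl
  have hLip : ∀ s, |θ s - θ xt| ≤ L * dist xt s := by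
    intro s
    have h := hθ.dist_le_mul s xt
    rw [Real.dist_eq] at h
    calc |θ s - θ xt| ≤ L.toNNReal * dist s xt := h
      _ = L * dist xt s := by rw [Real.coe_toNNReal _ hL, dist_comm]
  have hfst : ∀ s, dist xt s ≤ dist x (f s) := by
    intro s
    rw [hdist]
    exact Real.le_sqrt_of_sq_le (by nlinarith [sq_nonneg (dist xn (θ s))])
  have hsnd : ∀ s, |xn - θ s| ≤ dist x (f s) := by
    intro s
    rw [hdist, ← Real.dist_eq]
    exact Real.le_sqrt_of_sq_le (by nlinarith [sq_nonneg (dist xt s)])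
  have hsum : ∀ s, dist x (f s) ≤ dist xt s + |xn - θ s| := by
    intro s
    rw [hdist, ← Real.dist_eq]
    have h1 : (0:ℝ) ≤ dist xt s := dist_nonneg
    have h2 : (0:ℝ) ≤ dist xn (θ s) := dist_nonneg
    rw [show dist xt s + dist xn (θ s)
        = Real.sqrt ((dist xt s + dist xn (θ s)) ^ 2) by rw [Real.sqrt_sq (by positivity)]]
    apply Real.sqrt_le_sqrt
    nlinarith
  constructor
  · rw [div_mul_eq_mul_div, div_le_iff₀ hpos, one_mul]
    have key : ∀ s ∈ S, |xn - θ xt| + infDist xt S ≤ (2 + L) * dist x (f s) := by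
      intro s hsS
      have h1 : infDist xt S ≤ dist xt s := infDist_le_dist_of_mem hsS
      have h2 : |xn - θ xt| ≤ |xn - θ s| + L * dist xt s := by
        have habs : |xn - θ xt| ≤ |xn - θ s| + |θ s - θ xt| := by
          calc |xn - θ xt| = |(xn - θ s) + (θ s - θ xt)| := by ring_nf
            _ ≤ |xn - θ s| + |θ s - θ xt| := abs_add_le _ _
        linarith [hLip s]
      have h3 := hfst s
      have h4 := hsnd s
      nlinarith [dist_nonneg (x := x) (y := f s)]
    by_contra hcon
    push_neg at hcon
    have hlt : infDist x (f '' S) < (|xn - θ xt| + infDist xt S) / (2 + L) := by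
      rw [lt_div_iff₀ hpos]; linarith
    obtain ⟨y, ⟨s, hsS, rfl⟩, hy⟩ := (infDist_lt_iff (hS.image f)).mp hlt
    have := key s hsS
    rw [lt_div_iff₀ hpos] at hy
    nlinarith
  · apply le_of_forall_pos_le_add
    intro ε hε
    obtain ⟨s, hsS, hslt⟩ : ∃ s ∈ S, dist xt s < infDist xt S + ε / (2 + L) := by
      rw [← Metric.infDist_lt_iff hS]
      linarith [div_pos hε hpos]
    have h0 : infDist x (f '' S) ≤ dist x (f s) :=
      infDist_le_dist_of_mem ⟨s, hsS, rfl⟩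
    have h1 : |xn - θ s| ≤ |xn - θ xt| + L * dist xt s := by
      have habs : |xn - θ s| ≤ |xn - θ xt| + |θ s - θ xt| := by
        calc |xn - θ s| = |(xn - θ xt) - (θ s - θ xt)| := by ring_nf
          _ ≤ |xn - θ xt| + |θ s - θ xt| := abs_sub _ _
      linarith [hLip s]
    have h2 := hsum s
    have h5 : (0:ℝ) ≤ infDist xt S := infDist_nonneg
    have h6 : (0:ℝ) ≤ |xn - θ xt| := abs_nonneg _
    have hdiv : (2 + L) * (ε / (2 + L)) = ε := by field_simp
    have h7 : (1 + L) * dist xt s ≤ (1 + L) * (infDist xt S + ε / (2 + L)) :=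
      mul_le_mul_of_nonneg_left hslt.le (by linarith)
    have he : 0 ≤ ε / (2 + L) := le_of_lt (div_pos hε hpos)
    nlinarith [mul_nonneg hL h6]
end

section
/- Let L ≥ 0 and let ξ, ζ : ℝ^d → ℝ be L-Lipschitz functions with ξ(x̃) ≤ ζ(x̃) for all x̃. For σ ∈ [0,1] set f_σ := σ·ξ + (1−σ)·ζ. Then there exists a constant C > 0 depending only on L such that for all x̃, x̃' ∈ ℝ^d and all σ, σ' ∈ [0,1]: (1/C) · ( |x̃ − x̃'| + |σ − σ'|·(ζ(x̃) − ξ(x̃)) ) ≤ | (x̃, f_σ(x̃)) − (x̃', f_{σ'}(x̃')) | ≤ C · ( |x̃ − x̃'| + |σ − σ'|·(ζ(x̃) − ξ(x̃)) ), where | · | denotes the Euclidean norm on ℝ^d × ℝ = ℝ^{d+1}. -/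
/-!
Write `f_σ := σ ξ + (1 - σ) ζ`. Since `f_σ(x) - f_{σ'}(x) = (σ' - σ)(ζ(x) - ξ(x))` and every
`f_{σ'}` with `σ' ∈ [0, 1]` is again `L`-Lipschitz, the vertical gap `f_σ(x) - f_{σ'}(x')` differs
from `(σ' - σ)(ζ(x) - ξ(x))` by at most `L |x - x'|`. As the Euclidean norm of `(u, s)` is
comparable to `|u| + |s|`, both bounds follow with `C = L + 2`.
-/

open WithLp Set
open scoped NNReal ENNReal

namespace WithLp

variable {α β : Type*} [SeminormedAddCommGroup α] [SeminormedAddCommGroup β]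
  (p : ℝ≥0∞) [Fact (1 ≤ p)]

theorem dist_toLp_prod_le_add (x x' : α) (t t' : β) :
    dist (toLp p (x, t)) (toLp p (x', t')) ≤ dist x x' + dist t t' := by
  have hsplit : toLp p (x, t) - toLp p (x', t') = toLp p (x - x', 0) + toLp p (0, t - t') := by
    simp only [← toLp_sub, ← toLp_add, Prod.mk_sub_mk, Prod.mk_add_mk, add_zero, zero_add]
  rw [dist_eq_norm, hsplit, dist_eq_norm, dist_eq_norm, ← norm_toLp_fst p α β,
    ← norm_toLp_snd p α β]
  exact norm_add_le _ _

end WithLp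

def convexInterp {α : Type*} (ξ ζ : α → ℝ) (σ : ℝ) (x : α) : ℝ :=
  σ * ξ x + (1 - σ) * ζ x

section PseudoMetric

variable {α : Type*} [PseudoMetricSpace α] {K : ℝ≥0} {ξ ζ : α → ℝ}

theorem LipschitzWith.convexInterp (hξ : LipschitzWith K ξ) (hζ : LipschitzWith K ζ) {σ : ℝ}
    (hσ : σ ∈ Icc (0 : ℝ) 1) : LipschitzWith K (convexInterp ξ ζ σ) := by
  refine LipschitzWith.of_dist_le_mul fun x x' => ?_
  have hξx := hξ.dist_le_mul x x'
  have hζx := hζ.dist_le_mul x x'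
  rw [Real.dist_eq] at hξx hζx ⊢
  calc |_root_.convexInterp ξ ζ σ x - _root_.convexInterp ξ ζ σ x'|
      = |σ * (ξ x - ξ x') + (1 - σ) * (ζ x - ζ x')| := by
        simp only [_root_.convexInterp]; congr 1; ring
    _ ≤ σ * |ξ x - ξ x'| + (1 - σ) * |ζ x - ζ x'| := by
      refine (abs_add_le _ _).trans_eq ?_
      rw [abs_mul, abs_mul, abs_of_nonneg hσ.1, abs_of_nonneg (sub_nonneg.2 hσ.2)]
    _ ≤ σ * (K * dist x x') + (1 - σ) * (K * dist x x') := by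
      gcongr
      · exact hσ.1
      · exact sub_nonneg.2 hσ.2
    _ = K * dist x x' := by ring

theorem abs_convexInterp_sub_sub_le (hξ : LipschitzWith K ξ) (hζ : LipschitzWith K ζ)
    (σ : ℝ) {σ' : ℝ} (hσ' : σ' ∈ Icc (0 : ℝ) 1) (x x' : α) :
    |convexInterp ξ ζ σ x - convexInterp ξ ζ σ' x' - (σ' - σ) * (ζ x - ξ x)| ≤ K * dist x x' := by
  have hgap : convexInterp ξ ζ σ x - convexInterp ξ ζ σ' x' - (σ' - σ) * (ζ x - ξ x) =
      convexInterp ξ ζ σ' x - convexInterp ξ ζ σ' x' := by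
    simp only [convexInterp]; ring
  rw [hgap, ← Real.dist_eq]
  exact (hξ.convexInterp hζ hσ').dist_le_mul x x'

end PseudoMetric

section Band

variable {E : Type*} [SeminormedAddCommGroup E] {K : ℝ≥0} {ξ ζ : E → ℝ}
  (p : ℝ≥0∞) [Fact (1 ≤ p)]

theorem dist_toLp_convexInterp_le (hξ : LipschitzWith K ξ) (hζ : LipschitzWith K ζ)
    {x : E} (hx : ξ x ≤ ζ x) (x' : E) (σ : ℝ) {σ' : ℝ} (hσ' : σ' ∈ Icc (0 : ℝ) 1) :
    dist (toLp p (x, convexInterp ξ ζ σ x)) (toLp p (x', convexInterp ξ ζ σ' x')) ≤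
      (K + 1) * (dist x x' + |σ - σ'| * (ζ x - ξ x)) := by
  have hgap := abs_convexInterp_sub_sub_le hξ hζ σ hσ' x x'
  have hsep : |(σ' - σ) * (ζ x - ξ x)| = |σ - σ'| * (ζ x - ξ x) := by
    rw [abs_mul, abs_sub_comm, abs_of_nonneg (sub_nonneg.2 hx)]
  have hvert : dist (convexInterp ξ ζ σ x) (convexInterp ξ ζ σ' x') ≤
      K * dist x x' + |σ - σ'| * (ζ x - ξ x) := by
    rw [Real.dist_eq, ← hsep]
    linarith [abs_sub_abs_le_abs_sub (convexInterp ξ ζ σ x - convexInterp ξ ζ σ' x')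
      ((σ' - σ) * (ζ x - ξ x))]
  have hK : (0 : ℝ) ≤ K * (|σ - σ'| * (ζ x - ξ x)) :=
    mul_nonneg K.2 (mul_nonneg (abs_nonneg _) (sub_nonneg.2 hx))
  linarith [dist_toLp_prod_le_add p x x' (convexInterp ξ ζ σ x) (convexInterp ξ ζ σ' x')]

theorem le_dist_toLp_convexInterp (hξ : LipschitzWith K ξ) (hζ : LipschitzWith K ζ)
    (x x' : E) (σ : ℝ) {σ' : ℝ} (hσ' : σ' ∈ Icc (0 : ℝ) 1) :
    dist x x' + |σ - σ'| * (ζ x - ξ x) ≤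
      (K + 2) * dist (toLp p (x, convexInterp ξ ζ σ x)) (toLp p (x', convexInterp ξ ζ σ' x')) := by
  set N := dist (toLp p (x, convexInterp ξ ζ σ x)) (toLp p (x', convexInterp ξ ζ σ' x'))
  have hfst : dist x x' ≤ N := dist_fst_le (toLp p (x, _)) (toLp p (x', _))
  have hsnd : dist (convexInterp ξ ζ σ x) (convexInterp ξ ζ σ' x') ≤ N :=
    dist_snd_le (toLp p (x, _)) (toLp p (x', _))
  have hgap := abs_convexInterp_sub_sub_le hξ hζ σ hσ' x x'
  have hsep : |σ - σ'| * (ζ x - ξ x) ≤ |(σ' - σ) * (ζ x - ξ x)| := by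
    rw [abs_mul, abs_sub_comm]
    exact mul_le_mul_of_nonneg_left (le_abs_self _) (abs_nonneg _)
  have hvert : |σ - σ'| * (ζ x - ξ x) ≤
      dist (convexInterp ξ ζ σ x) (convexInterp ξ ζ σ' x') + K * dist x x' := by
    rw [Real.dist_eq]
    linarith [abs_sub_abs_le_abs_sub ((σ' - σ) * (ζ x - ξ x))
      (convexInterp ξ ζ σ x - convexInterp ξ ζ σ' x'),
      abs_sub_comm ((σ' - σ) * (ζ x - ξ x)) (convexInterp ξ ζ σ x - convexInterp ξ ζ σ' x')]
  have hKN : K * dist x x' ≤ K * N := mul_le_mul_of_nonneg_left hfst K.2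
  linarith

end Band

theorem stmt3_general (d : ℕ) (L : ℝ) :
    ∃ C : ℝ, 0 < C ∧
      ∀ ξ ζ : EuclideanSpace ℝ (Fin d) → ℝ,
        LipschitzWith L.toNNReal ξ → LipschitzWith L.toNNReal ζ →
        (∀ x, ξ x ≤ ζ x) →
        ∀ (x x' : EuclideanSpace ℝ (Fin d)) (σ σ' : ℝ),
          σ ∈ Set.Icc (0 : ℝ) 1 → σ' ∈ Set.Icc (0 : ℝ) 1 →
          (1 / C) * (dist x x' + |σ - σ'| * (ζ x - ξ x)) ≤
            ‖(WithLp.equiv 2 (EuclideanSpace ℝ (Fin d) × ℝ)).symm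
                (x, σ * ξ x + (1 - σ) * ζ x) -
              (WithLp.equiv 2 (EuclideanSpace ℝ (Fin d) × ℝ)).symm
                (x', σ' * ξ x' + (1 - σ') * ζ x')‖ ∧
          ‖(WithLp.equiv 2 (EuclideanSpace ℝ (Fin d) × ℝ)).symm
                (x, σ * ξ x + (1 - σ) * ζ x) -
              (WithLp.equiv 2 (EuclideanSpace ℝ (Fin d) × ℝ)).symm
                (x', σ' * ξ x' + (1 - σ') * ζ x')‖ ≤
            C * (dist x x' + |σ - σ'| * (ζ x - ξ x)) := by
  have hC : (0 : ℝ) < L.toNNReal + 2 := by positivity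
  refine ⟨L.toNNReal + 2, hC, fun ξ ζ hξ hζ hle x x' σ σ' _ hσ' => ?_⟩
  rw [WithLp.equiv_symm_apply, ← dist_eq_norm]
  have hrhs_nonneg : 0 ≤ dist x x' + |σ - σ'| * (ζ x - ξ x) :=
    add_nonneg dist_nonneg (mul_nonneg (abs_nonneg _) (sub_nonneg.2 (hle x)))
  constructor
  · rw [one_div_mul_eq_div, div_le_iff₀ hC]
    exact (le_dist_toLp_convexInterp 2 hξ hζ x x' σ hσ').trans_eq (mul_comm _ _)
  · refine (dist_toLp_convexInterp_le 2 hξ hζ (hle x) x' σ hσ').trans ?_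
    gcongr
    norm_num

/-- Two-sided distance comparison in the band between two uniformly Lipschitz graphs:
for `L`-Lipschitz `ξ ≤ ζ : ℝ^d → ℝ` and `f_σ := σ ξ + (1−σ) ζ`, there is `C > 0`
depending only on `L` such that the Euclidean distance between `(x, f_σ(x))` and
`(x', f_{σ'}(x'))` is comparable to `|x − x'| + |σ − σ'| (ζ(x) − ξ(x))`. -/
theorem stmt3 (d : ℕ) (L : ℝ) (hL : 0 ≤ L) :
    ∃ C : ℝ, 0 < C ∧
      ∀ ξ ζ : EuclideanSpace ℝ (Fin d) → ℝ,
        LipschitzWith L.toNNReal ξ → LipschitzWith L.toNNReal ζ →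
        (∀ x, ξ x ≤ ζ x) →
        ∀ (x x' : EuclideanSpace ℝ (Fin d)) (σ σ' : ℝ),
          σ ∈ Set.Icc (0 : ℝ) 1 → σ' ∈ Set.Icc (0 : ℝ) 1 →
          (1 / C) * (dist x x' + |σ - σ'| * (ζ x - ξ x)) ≤
            ‖(WithLp.equiv 2 (EuclideanSpace ℝ (Fin d) × ℝ)).symm
                (x, σ * ξ x + (1 - σ) * ζ x) -
              (WithLp.equiv 2 (EuclideanSpace ℝ (Fin d) × ℝ)).symm
                (x', σ' * ξ x' + (1 - σ') * ζ x')‖ ∧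
          ‖(WithLp.equiv 2 (EuclideanSpace ℝ (Fin d) × ℝ)).symm
                (x, σ * ξ x + (1 - σ) * ζ x) -
              (WithLp.equiv 2 (EuclideanSpace ℝ (Fin d) × ℝ)).symm
                (x', σ' * ξ x' + (1 - σ') * ζ x')‖ ≤
            C * (dist x x' + |σ - σ'| * (ζ x - ξ x)) :=
  stmt3_general d L
end

section
/- Let L ≥ 0, let ξ₁ ≤ ξ₂ : ℝ^d → ℝ and ξ₁' ≤ ξ₂' : ℝ^d → ℝ be L-Lipschitz functions, and let ρ : ℝ^d → ℝ^d be an L-Lipschitz map such that (ξ₂' − ξ₁')(ρ(x̃)) ≤ L · (ξ₂ − ξ₁)(x̃) for all x̃ ∈ ℝ^d. Then there exists a constant C > 0 depending only on L such that for all x̃, x̃' ∈ ℝ^d and all σ, σ' ∈ [0,1]: | ( ρ(x̃), σ·ξ₁'(ρ(x̃)) + (1−σ)·ξ₂'(ρ(x̃)) ) − ( ρ(x̃'), σ'·ξ₁'(ρ(x̃')) + (1−σ')·ξ₂'(ρ(x̃')) ) | ≤ C · | ( x̃, σ·ξ₁(x̃) + (1−σ)·ξ₂(x̃) ) − ( x̃',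 σ'·ξ₁(x̃') + (1−σ')·ξ₂(x̃') ) |, where | · | denotes the Euclidean norm on ℝ^d × ℝ = ℝ^{d+1}. -/
lemma aux_fst_le {E : Type*} [NormedAddCommGroup E] (v : WithLp 2 (E × ℝ)) :
    ‖v.fst‖ ≤ ‖v‖ := by
  have h := WithLp.prod_norm_sq_eq_of_L2 v
  nlinarith [norm_nonneg v, norm_nonneg v.fst, norm_nonneg v.snd]

lemma aux_snd_le {E : Type*} [NormedAddCommGroup E] (v : WithLp 2 (E × ℝ)) :
    ‖v.snd‖ ≤ ‖v‖ := by
  have h := WithLp.prod_norm_sq_eq_of_L2 v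
  nlinarith [norm_nonneg v, norm_nonneg v.fst, norm_nonneg v.snd]

lemma aux_le_add {E : Type*} [NormedAddCommGroup E] (v : WithLp 2 (E × ℝ)) :
    ‖v‖ ≤ ‖v.fst‖ + ‖v.snd‖ := by
  have h := WithLp.prod_norm_sq_eq_of_L2 v
  nlinarith [norm_nonneg v, norm_nonneg v.fst, norm_nonneg v.snd]

set_option maxHeartbeats 1000000 in
/-- The fiberwise-affine lift of an `L`-Lipschitz map `ρ` sending the band
`[ξ₁, ξ₂]` to the band `[ξ₁', ξ₂']` (preserving the affine fiber parameter `σ`)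
is Lipschitz with a constant depending only on `L`, provided
`(ξ₂' − ξ₁') ∘ ρ ≤ L (ξ₂ − ξ₁)`. -/
theorem stmt4 (d : ℕ) (L : ℝ) (hL : 0 ≤ L) :
    ∃ C : ℝ, 0 < C ∧
      ∀ ξ₁ ξ₂ ξ₁' ξ₂' : EuclideanSpace ℝ (Fin d) → ℝ,
        LipschitzWith L.toNNReal ξ₁ → LipschitzWith L.toNNReal ξ₂ →
        LipschitzWith L.toNNReal ξ₁' → LipschitzWith L.toNNReal ξ₂' →
        (∀ x, ξ₁ x ≤ ξ₂ x) → (∀ x, ξ₁' x ≤ ξ₂' x) →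
        ∀ ρ : EuclideanSpace ℝ (Fin d) → EuclideanSpace ℝ (Fin d),
          LipschitzWith L.toNNReal ρ →
          (∀ x, ξ₂' (ρ x) - ξ₁' (ρ x) ≤ L * (ξ₂ x - ξ₁ x)) →
          ∀ (x x' : EuclideanSpace ℝ (Fin d)) (σ σ' : ℝ),
            σ ∈ Set.Icc (0 : ℝ) 1 → σ' ∈ Set.Icc (0 : ℝ) 1 →
            ‖(WithLp.equiv 2 (EuclideanSpace ℝ (Fin d) × ℝ)).symm
                  (ρ x, σ * ξ₁' (ρ x) + (1 - σ) * ξ₂' (ρ x)) -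
                (WithLp.equiv 2 (EuclideanSpace ℝ (Fin d) × ℝ)).symm
                  (ρ x', σ' * ξ₁' (ρ x') + (1 - σ') * ξ₂' (ρ x'))‖ ≤
              C * ‖(WithLp.equiv 2 (EuclideanSpace ℝ (Fin d) × ℝ)).symm
                  (x, σ * ξ₁ x + (1 - σ) * ξ₂ x) -
                (WithLp.equiv 2 (EuclideanSpace ℝ (Fin d) × ℝ)).symm
                  (x', σ' * ξ₁ x' + (1 - σ') * ξ₂ x')‖ := by
  refine ⟨6 * L ^ 2 + 2 * L + 1, by positivity, ?_⟩
  intro ξ₁ ξ₂ ξ₁' ξ₂' h₁ h₂ h₁' h₂' hle hle' ρ hρ hband x x' σ σ' hσ hσ'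
  -- generic Lipschitz translation
  have lip : ∀ (f : EuclideanSpace ℝ (Fin d) → ℝ), LipschitzWith L.toNNReal f → ∀ a b : EuclideanSpace ℝ (Fin d),
      |f a - f b| ≤ L * ‖a - b‖ := by
    intro f hf a b
    have := hf.dist_le_mul a b
    rwa [Real.dist_eq, dist_eq_norm, Real.coe_toNNReal L hL] at this
  have hρL : ‖ρ x - ρ x'‖ ≤ L * ‖x - x'‖ := by
    have := hρ.dist_le_mul x x'
    rwa [dist_eq_norm, dist_eq_norm, Real.coe_toNNReal L hL] at this
  set N := ‖x - x'‖ with hN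
  have hN0 : 0 ≤ N := norm_nonneg _
  set f := σ * ξ₁ x + (1 - σ) * ξ₂ x with hf
  set f' := σ' * ξ₁ x' + (1 - σ') * ξ₂ x' with hf'
  set g := σ * ξ₁' (ρ x) + (1 - σ) * ξ₂' (ρ x) with hg
  set g' := σ' * ξ₁' (ρ x') + (1 - σ') * ξ₂' (ρ x') with hg'
  set v := (WithLp.equiv 2 (EuclideanSpace ℝ (Fin d) × ℝ)).symm (ρ x, g) -
    (WithLp.equiv 2 (EuclideanSpace ℝ (Fin d) × ℝ)).symm (ρ x', g')
  set w := (WithLp.equiv 2 (EuclideanSpace ℝ (Fin d) × ℝ)).symm (x, f) -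
    (WithLp.equiv 2 (EuclideanSpace ℝ (Fin d) × ℝ)).symm (x', f')
  have hvf : v.fst = ρ x - ρ x' := rfl
  have hvs : v.snd = g - g' := rfl
  have hwf : w.fst = x - x' := rfl
  have hws : w.snd = f - f' := rfl
  have hM1 : N ≤ ‖w‖ := by rw [hN, ← hwf]; exact aux_fst_le w
  have hM2 : |f - f'| ≤ ‖w‖ := by rw [← Real.norm_eq_abs, ← hws]; exact aux_snd_le w
  -- scalar estimates
  have h1 : |ξ₂' (ρ x) - ξ₂' (ρ x')| ≤ L ^ 2 * N := by
    calc |ξ₂' (ρ x) - ξ₂' (ρ x')| ≤ L * ‖ρ x - ρ x'‖ := lip _ h₂' _ _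
    _ ≤ L * (L * N) := by nlinarith
    _ = L ^ 2 * N := by ring
  have h2 : |(ξ₂' (ρ x) - ξ₁' (ρ x)) - (ξ₂' (ρ x') - ξ₁' (ρ x'))| ≤ 2 * L ^ 2 * N := by
    have a1 := h1
    have a2 : |ξ₁' (ρ x) - ξ₁' (ρ x')| ≤ L ^ 2 * N := by
      calc |ξ₁' (ρ x) - ξ₁' (ρ x')| ≤ L * ‖ρ x - ρ x'‖ := lip _ h₁' _ _
      _ ≤ L * (L * N) := by nlinarith
      _ = L ^ 2 * N := by ring
    have := abs_sub (ξ₂' (ρ x) - ξ₂' (ρ x')) (ξ₁' (ρ x) - ξ₁' (ρ x'))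
    calc |(ξ₂' (ρ x) - ξ₁' (ρ x)) - (ξ₂' (ρ x') - ξ₁' (ρ x'))|
        = |(ξ₂' (ρ x) - ξ₂' (ρ x')) - (ξ₁' (ρ x) - ξ₁' (ρ x'))| := by ring_nf
      _ ≤ |ξ₂' (ρ x) - ξ₂' (ρ x')| + |ξ₁' (ρ x) - ξ₁' (ρ x')| := abs_sub _ _
      _ ≤ 2 * L ^ 2 * N := by linarith
  -- downstairs: |σ - σ'| * e ≤ |f - f'| + 3 L N  where e = ξ₂ x' - ξ₁ x'
  set e : ℝ := ξ₂ x' - ξ₁ x' with he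
  have he0 : 0 ≤ e := sub_nonneg.mpr (hle x')
  have b1 : |ξ₂ x - ξ₂ x'| ≤ L * N := lip _ h₂ _ _
  have b2 : |(ξ₂ x - ξ₁ x) - e| ≤ 2 * L * N := by
    have c1 : |ξ₁ x - ξ₁ x'| ≤ L * N := lip _ h₁ _ _
    calc |(ξ₂ x - ξ₁ x) - e| = |(ξ₂ x - ξ₂ x') - (ξ₁ x - ξ₁ x')| := by rw [he]; ring_nf
      _ ≤ |ξ₂ x - ξ₂ x'| + |ξ₁ x - ξ₁ x'| := abs_sub _ _
      _ ≤ 2 * L * N := by linarith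
  have hfexp : f - f' = (ξ₂ x - ξ₂ x') - σ * ((ξ₂ x - ξ₁ x) - e) - (σ - σ') * e := by
    rw [hf, hf', he]; ring
  have hσe : |σ - σ'| * e ≤ |f - f'| + 3 * L * N := by
    have : |(σ - σ') * e| ≤ |f - f'| + |ξ₂ x - ξ₂ x'| + |σ * ((ξ₂ x - ξ₁ x) - e)| := by
      have : (σ - σ') * e = (ξ₂ x - ξ₂ x') - σ * ((ξ₂ x - ξ₁ x) - e) - (f - f') := by
        rw [hfexp]; ring
      rw [this]
      calc |(ξ₂ x - ξ₂ x') - σ * ((ξ₂ x - ξ₁ x) - e) - (f - f')|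
          ≤ |(ξ₂ x - ξ₂ x') - σ * ((ξ₂ x - ξ₁ x) - e)| + |f - f'| := abs_sub _ _
        _ ≤ |ξ₂ x - ξ₂ x'| + |σ * ((ξ₂ x - ξ₁ x) - e)| + |f - f'| :=
            by linarith [abs_sub (ξ₂ x - ξ₂ x') (σ * ((ξ₂ x - ξ₁ x) - e))]
        _ = |f - f'| + |ξ₂ x - ξ₂ x'| + |σ * ((ξ₂ x - ξ₁ x) - e)| := by ring
    have habsσ : |σ| ≤ 1 := abs_le.mpr ⟨by linarith [hσ.1], hσ.2⟩
    have hσmul : |σ * ((ξ₂ x - ξ₁ x) - e)| ≤ 2 * L * N := by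
      rw [abs_mul]
      calc |σ| * |(ξ₂ x - ξ₁ x) - e| ≤ 1 * (2 * L * N) := by
            apply mul_le_mul habsσ b2 (abs_nonneg _) zero_le_one
        _ = 2 * L * N := by ring
    rw [abs_mul, abs_of_nonneg he0] at this
    linarith
  -- upstairs band width bound
  have he' : 0 ≤ ξ₂' (ρ x') - ξ₁' (ρ x') := sub_nonneg.mpr (hle' _)
  have hband' : ξ₂' (ρ x') - ξ₁' (ρ x') ≤ L * e := hband x'
  -- main scalar bound
  have hgexp : g - g' = (ξ₂' (ρ x) - ξ₂' (ρ x'))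
      - σ * ((ξ₂' (ρ x) - ξ₁' (ρ x)) - (ξ₂' (ρ x') - ξ₁' (ρ x')))
      - (σ - σ') * (ξ₂' (ρ x') - ξ₁' (ρ x')) := by rw [hg, hg']; ring
  have habsσ : |σ| ≤ 1 := abs_le.mpr ⟨by linarith [hσ.1], hσ.2⟩
  have hgg : |g - g'| ≤ 6 * L ^ 2 * N + L * |f - f'| := by
    have t1 : |σ * ((ξ₂' (ρ x) - ξ₁' (ρ x)) - (ξ₂' (ρ x') - ξ₁' (ρ x')))|
        ≤ 2 * L ^ 2 * N := by
      rw [abs_mul]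
      calc |σ| * _ ≤ 1 * (2 * L ^ 2 * N) :=
            mul_le_mul habsσ h2 (abs_nonneg _) zero_le_one
        _ = 2 * L ^ 2 * N := by ring
    have t2 : |(σ - σ') * (ξ₂' (ρ x') - ξ₁' (ρ x'))| ≤ L * (|f - f'| + 3 * L * N) := by
      rw [abs_mul, abs_of_nonneg he']
      calc |σ - σ'| * (ξ₂' (ρ x') - ξ₁' (ρ x')) ≤ |σ - σ'| * (L * e) :=
            mul_le_mul_of_nonneg_left hband' (abs_nonneg _)
        _ = L * (|σ - σ'| * e) := by ring
        _ ≤ L * (|f - f'| + 3 * L * N) := mul_le_mul_of_nonneg_left hσe hL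
    calc |g - g'| ≤ |ξ₂' (ρ x) - ξ₂' (ρ x')|
          + |σ * ((ξ₂' (ρ x) - ξ₁' (ρ x)) - (ξ₂' (ρ x') - ξ₁' (ρ x')))|
          + |(σ - σ') * (ξ₂' (ρ x') - ξ₁' (ρ x'))| := by
          rw [hgexp]
          have := abs_sub ((ξ₂' (ρ x) - ξ₂' (ρ x'))
            - σ * ((ξ₂' (ρ x) - ξ₁' (ρ x)) - (ξ₂' (ρ x') - ξ₁' (ρ x'))))
            ((σ - σ') * (ξ₂' (ρ x') - ξ₁' (ρ x')))
          have h' := abs_sub (ξ₂' (ρ x) - ξ₂' (ρ x'))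
            (σ * ((ξ₂' (ρ x) - ξ₁' (ρ x)) - (ξ₂' (ρ x') - ξ₁' (ρ x'))))
          linarith
      _ ≤ L ^ 2 * N + 2 * L ^ 2 * N + L * (|f - f'| + 3 * L * N) := by linarith
      _ = 6 * L ^ 2 * N + L * |f - f'| := by ring
  -- conclude
  have key : ‖v‖ ≤ ‖v.fst‖ + ‖v.snd‖ := aux_le_add v
  rw [hvf, hvs] at key
  have habsff : 0 ≤ |f - f'| := abs_nonneg _
  calc ‖v‖ ≤ ‖ρ x - ρ x'‖ + ‖g - g'‖ := key
    _ ≤ L * N + (6 * L ^ 2 * N + L * |f - f'|) := by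
        rw [Real.norm_eq_abs]; linarith
    _ ≤ (6 * L ^ 2 + 2 * L + 1) * ‖w‖ := by nlinarith [norm_nonneg w]
end

section
/- Let X := {(x, y) ∈ ℝ² : 0 < x < 1 and |y| ≤ exp(−1/x²)}. Then for every natural number m, the function (x, y) ↦ x^{−m} is Lebesgue-integrable on X (with respect to the 2-dimensional Lebesgue measure). -/
open MeasureTheory Set Real
open scoped Nat

/-!
On the cusp, `|y| ≤ exp (-1 / x²)` turns into `|y| ^ (-1/2) ≥ exp (1 / (2x²))`, and the exponential
series gives `exp (1 / (2x²)) ≥ x⁻ᵐ / (2ᵐ m!)` for `0 < x ≤ 1`. So `x⁻ᵐ` is dominated on the cusp by a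
multiple of `|y| ^ (-1/2)`, which is integrable on the rectangle `(0, 1) × [-1, 1]`.
-/

lemma intervalIntegrable_abs_rpow {r : ℝ} (hr : -1 < r) (a b : ℝ) :
    IntervalIntegrable (fun y : ℝ => |y| ^ r) volume a b := by
  have from_zero_of_nonneg (c : ℝ) (hc : 0 ≤ c) :
      IntervalIntegrable (fun y : ℝ => |y| ^ r) volume 0 c := by
    refine (intervalIntegral.intervalIntegrable_rpow' hr).congr fun y hy => ?_
    rw [uIoc_of_le hc] at hy
    simp only [abs_of_pos hy.1]
  have from_zero (c : ℝ) : IntervalIntegrable (fun y : ℝ => |y| ^ r) volume 0 c := by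
    rcases le_total 0 c with hc | hc
    · exact from_zero_of_nonneg c hc
    · refine (IntervalIntegrable.iff_comp_neg).2 ?_
      simpa using from_zero_of_nonneg (-c) (by linarith)
  exact (from_zero a).symm.trans (from_zero b)

lemma IntegrableOn.comp_snd_prod {α β E : Type*} [MeasurableSpace α] [MeasurableSpace β]
    [NormedAddCommGroup E] {μ : Measure α} {ν : Measure β} [SFinite μ] [SFinite ν]
    {s : Set α} {t : Set β} {f : β → E} (hs : μ s ≠ ⊤) (hf : IntegrableOn f t ν) :
    IntegrableOn (fun p : α × β => f p.2) (s ×ˢ t) (μ.prod ν) := by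
  have : IsFiniteMeasure (μ.restrict s) := isFiniteMeasure_restrict.2 hs
  rw [IntegrableOn, ← Measure.prod_restrict]
  exact hf.comp_snd _

lemma zpow_neg_natCast_le_exp (m : ℕ) {x : ℝ} (hx₀ : 0 < x) (hx₁ : x ≤ 1) :
    x ^ (-(m : ℤ)) ≤ 2 ^ m * m ! * exp (1 / x ^ 2 / 2) := by
  have hx : x⁻¹ ≤ 1 / x ^ 2 := by
    rw [one_div, ← inv_pow, sq]
    exact le_mul_of_one_le_left (by positivity) (one_le_inv₀ hx₀ |>.2 hx₁)
  calc x ^ (-(m : ℤ)) = x⁻¹ ^ m := by rw [zpow_neg, zpow_natCast, inv_pow]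
    _ ≤ (1 / x ^ 2) ^ m := by gcongr
    _ = 2 ^ m * m ! * ((1 / x ^ 2 / 2) ^ m / m !) := by field_simp; rw [← mul_pow]; ring_nf
    _ ≤ 2 ^ m * m ! * exp (1 / x ^ 2 / 2) :=
      mul_le_mul_of_nonneg_left (pow_div_factorial_le_exp _ (by positivity) m) (by positivity)

lemma exp_half_le_rpow_neg_half {a t : ℝ} (ha : 0 < a) (h : a ≤ exp (-t)) :
    exp (t / 2) ≤ a ^ (-(1 / 2) : ℝ) := by
  calc exp (t / 2) = exp (-t) ^ (-(1 / 2) : ℝ) := by rw [← exp_mul]; ring_nf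
    _ ≤ a ^ (-(1 / 2) : ℝ) := rpow_le_rpow_of_nonpos ha h (by norm_num)

/-- On the flat cusp `X = {(x,y) : 0 < x < 1, |y| ≤ exp(−1/x²)}`, the function
`(x,y) ↦ x^{−m}` is Lebesgue-integrable for every `m ∈ ℕ`. -/
theorem stmt5 (m : ℕ) :
    IntegrableOn (fun p : ℝ × ℝ => p.1 ^ (-(m : ℤ)))
      {p : ℝ × ℝ | 0 < p.1 ∧ p.1 < 1 ∧ |p.2| ≤ Real.exp (-(1 / p.1 ^ 2))} volume := by
  set X := {p : ℝ × ℝ | 0 < p.1 ∧ p.1 < 1 ∧ |p.2| ≤ Real.exp (-(1 / p.1 ^ 2))}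
  have hX : MeasurableSet X := by measurability
  have hX_sub : X ⊆ Ioo 0 1 ×ˢ Icc (-1) 1 := by
    rintro p ⟨hx₀, hx₁, hy⟩
    exact ⟨⟨hx₀, hx₁⟩, abs_le.1 (hy.trans (exp_le_one_iff.2 (neg_nonpos.2 (by positivity))))⟩
  have hg : IntegrableOn (fun p : ℝ × ℝ => 2 ^ m * m ! * |p.2| ^ (-(1 / 2) : ℝ))
      (Ioo 0 1 ×ˢ Icc (-1) 1) := by
    rw [Measure.volume_eq_prod]
    have h_abs_rpow : IntegrableOn (fun y : ℝ => |y| ^ (-(1 / 2) : ℝ)) (Icc (-1) 1) :=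
      (intervalIntegrable_iff_integrableOn_Icc_of_le (by norm_num)).1
        (intervalIntegrable_abs_rpow (by norm_num) _ _)
    exact IntegrableOn.comp_snd_prod measure_Ioo_lt_top.ne (h_abs_rpow.const_mul _)
  have hy_ne : ∀ᵐ p : ℝ × ℝ, p.2 ≠ 0 := by
    rw [Measure.volume_eq_prod]
    exact Measure.quasiMeasurePreserving_snd.ae (Measure.ae_ne volume 0)
  refine (hg.mono_set hX_sub).mono' (measurable_fst.pow_const _).aestronglyMeasurable ?_
  filter_upwards [ae_restrict_mem hX, ae_restrict_of_ae hy_ne] with p ⟨hx₀, hx₁, hy⟩ hy₀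
  rw [norm_of_nonneg (by positivity)]
  calc p.1 ^ (-(m : ℤ)) ≤ 2 ^ m * m ! * exp (1 / p.1 ^ 2 / 2) :=
        zpow_neg_natCast_le_exp m hx₀ hx₁.le
    _ ≤ 2 ^ m * m ! * |p.2| ^ (-(1 / 2) : ℝ) := by
        gcongr; exact exp_half_le_rpow_neg_half (abs_pos.2 hy₀) hy
end

section
/- Let (N, ν) be a measure space, let p ∈ (1, ∞) with conjugate exponent p' := p/(p−1), let T > 1 and l ≥ 0 be real numbers, and let U : [1, T] × N → ℝ be a measurable function such that for ν-almost every x ∈ N the map t ↦ U(t, x) is continuously differentiable on [1, T] with U(T, x) = 0, and such that (t,x) ↦ ∂U/∂t(t,x) is measurable. Then ( ∫_N |U(1, x)|^p dν(x) )^{1/p} ≤ ( ∫₁^T t^{−l p'/p} dt )^{1/p'} · ( ∫₁^T ∫_N |∂U/∂t(t, x)|^p · t^l dν(x) dt )^{1/p}. -/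
/-!
Since `U(T, x) = 0`, the fundamental theorem of calculus gives `|U(1, x)| ≤ ∫₁^T |∂ₜU(t, x)| dt`,
and Hölder's inequality for the splitting `|∂ₜU| = t^{-l/p} · (t^{l/p} |∂ₜU|)` bounds this by
`(∫₁^T t^{-lp'/p} dt)^{1/p'} (∫₁^T |∂ₜU|^p t^l dt)^{1/p}`. Raising to the power `p` and
integrating in `x` leaves an exchange of the `x`- and `t`-integrals. As `ν` need not be
σ-finite, Tonelli's theorem is not available; instead the integrand, continuous in `t`, is
approximated from below by functions that depend on `t` only through `⌊(n + 1) t⌋`, for which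
the exchange is a computation with countable sums, and Fatou's lemma passes to the limit.
-/

open MeasureTheory Set Filter Topology ENNReal Function

section Swap

variable {α β ι : Type*} [MeasurableSpace α] [MeasurableSpace β]
  [MeasurableSpace ι] [Countable ι] [MeasurableSingletonClass ι]

theorem lintegral_comp_of_countable (μ : Measure α) {φ : α → ι} (hφ : Measurable φ)
    (m : ι → ℝ≥0∞) : ∫⁻ t, m (φ t) ∂μ = ∑' k, m k * μ (φ ⁻¹' {k}) := by
  rw [← lintegral_map (measurable_of_countable m) hφ, lintegral_countable']
  simp only [Measure.map_apply hφ (measurableSet_singleton _)]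

theorem lintegral_lintegral_comp_swap_of_countable (μ : Measure α) (ν : Measure β) {φ : α → ι}
    (hφ : Measurable φ) {m : ι → β → ℝ≥0∞} (hm : ∀ k, Measurable (m k)) :
    ∫⁻ x, ∫⁻ t, m (φ t) x ∂μ ∂ν = ∫⁻ t, ∫⁻ x, m (φ t) x ∂ν ∂μ := by
  simp only [fun x => lintegral_comp_of_countable μ hφ (m · x),
    lintegral_comp_of_countable μ hφ fun k => ∫⁻ x, m k x ∂ν]
  rw [lintegral_tsum fun k => ((hm k).mul_const _).aemeasurable]
  simp only [lintegral_mul_const _ (hm _)]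

end Swap

section LowerApproximation

variable {β : Type*}

noncomputable def cellInf (f : ℝ → β → ℝ≥0∞) (U : Set ℝ) (n : ℕ) (k : ℤ) (x : β) : ℝ≥0∞ :=
  ⨅ (q : ℚ) (_ : (q : ℝ) ∈ U ∧ ⌊(n + 1) * (q : ℝ)⌋ = k), f q x

variable {f : ℝ → β → ℝ≥0∞} {U : Set ℝ} {t : ℝ} {x : β}

theorem measurable_cellInf [MeasurableSpace β] (hf : Measurable (uncurry f)) (n : ℕ) (k : ℤ) :
    Measurable (cellInf f U n k) :=
  .iInf fun _ => .iInf fun _ => hf.comp measurable_prodMk_left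

theorem eventually_floor_mul_eq_nhdsGT (c t : ℝ) (hc : 0 < c) :
    ∀ᶠ s in 𝓝[>] t, ⌊c * s⌋ = ⌊c * t⌋ := by
  have hlt : t < (⌊c * t⌋ + 1) / c := by
    rw [lt_div_iff₀ hc, mul_comm]
    exact Int.lt_floor_add_one _
  filter_upwards [Ioo_mem_nhdsGT hlt] with s hs
  rw [Int.floor_eq_iff]
  constructor
  · exact (Int.floor_le _).trans (by gcongr; exact hs.1.le)
  · have := hs.2
    rwa [lt_div_iff₀ hc, mul_comm] at this

theorem cellInf_floor_le (hU : IsOpen U) (ht : t ∈ U) (hf : ContinuousWithinAt (f · x) U t)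
    (n : ℕ) : cellInf f U n ⌊(n + 1) * t⌋ x ≤ f t x := by
  obtain ⟨u, -, htu, hu⟩ := Real.exists_seq_rat_strictAnti_tendsto t
  have hu' : Tendsto (fun k => (u k : ℝ)) atTop (𝓝[>] t) :=
    tendsto_nhdsWithin_iff.2 ⟨hu, .of_forall htu⟩
  have hcell : ∀ᶠ k in atTop, (u k : ℝ) ∈ U ∧ ⌊(n + 1) * (u k : ℝ)⌋ = ⌊(n + 1) * t⌋ :=
    hu'.eventually (Eventually.and (mem_nhdsWithin_of_mem_nhds (hU.mem_nhds ht))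
      (eventually_floor_mul_eq_nhdsGT _ t n.cast_add_one_pos))
  have hlim : Tendsto (fun k => f (u k) x) atTop (𝓝 (f t x)) :=
    hf.tendsto.comp (tendsto_nhdsWithin_iff.2 ⟨hu, hcell.mono fun _ hk => hk.1⟩)
  exact ge_of_tendsto hlim (hcell.mono fun k hk => iInf₂_le (u k) hk)

theorem le_liminf_cellInf_floor (hf : ContinuousWithinAt (f · x) U t) :
    f t x ≤ liminf (fun n : ℕ => cellInf f U n ⌊(n + 1) * t⌋ x) atTop := by
  refine le_of_forall_lt_imp_le_of_dense fun c hc => ?_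
  obtain ⟨δ, hδ, hball⟩ := Metric.mem_nhdsWithin_iff.1 (hf (Ioi_mem_nhds hc))
  obtain ⟨N, hN⟩ := exists_nat_one_div_lt hδ
  refine le_liminf_of_le (by isBoundedDefault) (eventually_atTop.2 ⟨N, fun n hn => ?_⟩)
  refine le_iInf₂ fun q hq => (hball ⟨?_, hq.1⟩ : c < f q x).le
  have hn1 : (0 : ℝ) < n + 1 := n.cast_add_one_pos
  have hdist : |(n + 1) * (q : ℝ) - (n + 1) * t| < 1 := Int.abs_sub_lt_one_of_floor_eq_floor hq.2
  rw [← mul_sub, abs_mul, abs_of_pos hn1, ← lt_div_iff₀' hn1] at hdist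
  calc dist (q : ℝ) t = |(q : ℝ) - t| := Real.dist_eq _ _
    _ < 1 / (n + 1) := hdist
    _ ≤ 1 / (N + 1) := by gcongr
    _ < δ := hN

end LowerApproximation

theorem lintegral_lintegral_le_swap_of_continuousOn {β : Type*} [MeasurableSpace β]
    (ν : Measure β) (μ : Measure ℝ) {U : Set ℝ} (hU : IsOpen U) {f : ℝ → β → ℝ≥0∞}
    (hf : Measurable (uncurry f)) (hfc : ∀ᵐ x ∂ν, ContinuousOn (f · x) U) :
    ∫⁻ x, ∫⁻ t in U, f t x ∂μ ∂ν ≤ ∫⁻ t in U, ∫⁻ x, f t x ∂ν ∂μ := by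
  set g : ℕ → ℝ → β → ℝ≥0∞ := fun n t x => cellInf f U n ⌊(n + 1) * t⌋ x
  have hfloor : ∀ n : ℕ, Measurable fun t : ℝ => ⌊(n + 1) * t⌋ := fun n => by fun_prop
  have hg_t : ∀ n x, Measurable (g n · x) := fun n x =>
    (measurable_of_countable fun k => cellInf f U n k x).comp (hfloor n)
  have hg_x : ∀ n, Measurable fun x => ∫⁻ t in U, g n t x ∂μ := fun n => by
    simp only [g,
      fun x => lintegral_comp_of_countable (μ.restrict U) (hfloor n) (cellInf f U n · x)]
    exact .tsum fun k => (measurable_cellInf hf n k).mul_const _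
  have hg_le : ∀ n, ∫⁻ t in U, ∫⁻ x, g n t x ∂ν ∂μ ≤ ∫⁻ t in U, ∫⁻ x, f t x ∂ν ∂μ := fun n =>
    setLIntegral_mono' hU.measurableSet fun t ht => lintegral_mono_ae <|
      hfc.mono fun x hx => cellInf_floor_le hU ht (hx t ht) n
  calc ∫⁻ x, ∫⁻ t in U, f t x ∂μ ∂ν
      ≤ ∫⁻ x, liminf (fun n => ∫⁻ t in U, g n t x ∂μ) atTop ∂ν := by
        refine lintegral_mono_ae (hfc.mono fun x hx => ?_)
        exact (setLIntegral_mono' hU.measurableSet fun t ht =>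
          le_liminf_cellInf_floor (hx t ht)).trans (lintegral_liminf_le (hg_t · x))
    _ ≤ liminf (fun n => ∫⁻ x, ∫⁻ t in U, g n t x ∂μ ∂ν) atTop := lintegral_liminf_le hg_x
    _ = liminf (fun n => ∫⁻ t in U, ∫⁻ x, g n t x ∂ν ∂μ) atTop := by
        simp only [g, lintegral_lintegral_comp_swap_of_countable _ ν (hfloor _)
          (measurable_cellInf hf _)]
    _ ≤ ∫⁻ t in U, ∫⁻ x, f t x ∂ν ∂μ := liminf_le_of_frequently_le' (.of_forall hg_le)

theorem enorm_sub_le_lintegral_enorm_of_hasDerivWithinAt {E : Type*} [NormedAddCommGroup E]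
    [NormedSpace ℝ E] [CompleteSpace E] {u u' : ℝ → E} {a b : ℝ} (hab : a ≤ b)
    (hu : ∀ t ∈ Icc a b, HasDerivWithinAt u (u' t) (Icc a b) t)
    (hu' : ContinuousOn u' (Icc a b)) :
    ‖u b - u a‖ₑ ≤ ∫⁻ t in Icc a b, ‖u' t‖ₑ := by
  have hderiv : ∀ t ∈ Ioo a b, HasDerivWithinAt u (u' t) (Ioi t) t := fun t ht =>
    ((hu t (Ioo_subset_Icc_self ht)).hasDerivAt (Icc_mem_nhds ht.1 ht.2)).hasDerivWithinAt
  rw [← intervalIntegral.integral_eq_sub_of_hasDeriv_right_of_le hab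
    (fun t ht => (hu t ht).continuousWithinAt) hderiv (hu'.intervalIntegrable_of_Icc hab),
    intervalIntegral.integral_of_le hab, restrict_Ioc_eq_restrict_Icc]
  exact enorm_integral_le_lintegral_enorm _

theorem lintegral_le_lintegral_rpow_neg_mul_lintegral_rpow_mul {α : Type*} [MeasurableSpace α]
    (μ : Measure α) {p q : ℝ} (hpq : p.HolderConjugate q) {f w : α → ℝ≥0∞}
    (hf : AEMeasurable f μ) (hw : AEMeasurable w μ) (hw0 : ∀ᵐ a ∂μ, w a ≠ 0)
    (hw_top : ∀ᵐ a ∂μ, w a ≠ ∞) :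
    ∫⁻ a, f a ∂μ ≤ (∫⁻ a, w a ^ (-(q / p)) ∂μ) ^ (1 / q) * (∫⁻ a, f a ^ p * w a ∂μ) ^ (1 / p) := by
  have hsplit : ∀ᵐ a ∂μ, f a = w a ^ (-(1 / p)) * (w a ^ (1 / p) * f a) := by
    filter_upwards [hw0, hw_top] with a h0 htop
    rw [← mul_assoc, ← ENNReal.rpow_add _ _ h0 htop, neg_add_cancel, ENNReal.rpow_zero, one_mul]
  calc ∫⁻ a, f a ∂μ = ∫⁻ a, (fun a => w a ^ (-(1 / p))) a * (fun a => w a ^ (1 / p) * f a) a ∂μ :=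
        lintegral_congr_ae hsplit
    _ ≤ (∫⁻ a, (w a ^ (-(1 / p))) ^ q ∂μ) ^ (1 / q) *
          (∫⁻ a, (w a ^ (1 / p) * f a) ^ p ∂μ) ^ (1 / p) :=
        ENNReal.lintegral_mul_le_Lp_mul_Lq μ hpq.symm (hw.pow_const _) ((hw.pow_const _).mul hf)
    _ = _ := by
        congr 3 with a
        · rw [← ENNReal.rpow_mul]
          ring_nf
        · rw [ENNReal.mul_rpow_of_nonneg _ _ hpq.nonneg, ← ENNReal.rpow_mul,
            one_div_mul_cancel hpq.ne_zero, ENNReal.rpow_one, mul_comm]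

theorem enorm_le_weighted_of_hasDerivWithinAt_of_eq_zero {u u' : ℝ → ℝ} {p q a b l : ℝ}
    (hpq : p.HolderConjugate q) (ha : 0 < a) (hab : a ≤ b)
    (hu : ∀ t ∈ Icc a b, HasDerivWithinAt u (u' t) (Icc a b) t)
    (hu' : ContinuousOn u' (Icc a b)) (hub : u b = 0) :
    ‖u a‖ₑ ≤ (∫⁻ t in Icc a b, ENNReal.ofReal (t ^ (-(l * q) / p))) ^ (1 / q) *
      (∫⁻ t in Icc a b, ENNReal.ofReal (|u' t| ^ p * t ^ l)) ^ (1 / p) := by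
  have hpos : ∀ t ∈ Icc a b, 0 < t ^ l := fun t ht => Real.rpow_pos_of_pos (ha.trans_le ht.1) l
  have hHolder := lintegral_le_lintegral_rpow_neg_mul_lintegral_rpow_mul
    (volume.restrict (Icc a b)) hpq
    (hu'.aemeasurable measurableSet_Icc).enorm (by fun_prop : Measurable fun t : ℝ =>
      ENNReal.ofReal (t ^ l)).aemeasurable
    ((ae_restrict_iff' measurableSet_Icc).2 (.of_forall fun t ht => (ofReal_pos.2 (hpos t ht)).ne'))
    (.of_forall fun _ => ofReal_ne_top)
  calc ‖u a‖ₑ = ‖u b - u a‖ₑ := by rw [hub, zero_sub, enorm_neg]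
    _ ≤ ∫⁻ t in Icc a b, ‖u' t‖ₑ := enorm_sub_le_lintegral_enorm_of_hasDerivWithinAt hab hu hu'
    _ ≤ _ := hHolder
    _ = _ := by
        congr 2
        · refine setLIntegral_congr_fun measurableSet_Icc fun t ht => ?_
          rw [ENNReal.ofReal_rpow_of_pos (hpos t ht), ← Real.rpow_mul (ha.trans_le ht.1).le]
          ring_nf
        · refine setLIntegral_congr_fun measurableSet_Icc fun t ht => ?_
          rw [Real.enorm_eq_ofReal_abs, ENNReal.ofReal_rpow_of_nonneg (abs_nonneg _) hpq.nonneg,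
            ENNReal.ofReal_mul (by positivity)]

theorem stmt7_general {N : Type*} [MeasurableSpace N] (ν : Measure N)
    (p : ℝ) (hp : 1 < p) (T l : ℝ) (hT : 1 < T)
    (U U' : ℝ → N → ℝ)
    (hU'meas : Measurable (Function.uncurry U'))
    (hder : ∀ᵐ x ∂ν,
      (∀ t ∈ Set.Icc (1 : ℝ) T,
        HasDerivWithinAt (fun s => U s x) (U' t x) (Set.Icc (1 : ℝ) T) t) ∧
      ContinuousOn (fun t => U' t x) (Set.Icc (1 : ℝ) T) ∧ U T x = 0) :
    (∫⁻ x, ENNReal.ofReal (|U 1 x| ^ p) ∂ν) ^ (1 / p) ≤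
      (∫⁻ t in Set.Icc (1 : ℝ) T,
          ENNReal.ofReal (t ^ (-(l * (p / (p - 1))) / p))) ^ (1 / (p / (p - 1))) *
        (∫⁻ t in Set.Icc (1 : ℝ) T,
          ∫⁻ x, ENNReal.ofReal (|U' t x| ^ p * t ^ l) ∂ν) ^ (1 / p) := by
  set q := p / (p - 1)
  have hpq : p.HolderConjugate q := .conjExponent hp
  set A := ∫⁻ t in Icc (1 : ℝ) T, ENNReal.ofReal (t ^ (-(l * q) / p))
  set F : ℝ → N → ℝ≥0∞ := fun t x => ENNReal.ofReal (|U' t x| ^ p * t ^ l)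
  have hF : Measurable (uncurry F) := by
    unfold F; fun_prop
  have hpointwise : ∀ᵐ x ∂ν, ‖U 1 x‖ₑ ≤ A ^ (1 / q) * (∫⁻ t in Icc 1 T, F t x) ^ (1 / p) :=
    hder.mono fun x hx =>
      enorm_le_weighted_of_hasDerivWithinAt_of_eq_zero hpq one_pos hT.le hx.1 hx.2.1 hx.2.2
  have hswap : ∫⁻ x, (∫⁻ t in Icc 1 T, F t x) ∂ν ≤ ∫⁻ t in Icc 1 T, ∫⁻ x, F t x ∂ν := by
    simp only [← restrict_Ioo_eq_restrict_Icc]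
    refine lintegral_lintegral_le_swap_of_continuousOn ν volume isOpen_Ioo hF <| hder.mono
      fun x hx => ContinuousOn.mono ?_ Ioo_subset_Icc_self
    exact ENNReal.continuous_ofReal.comp_continuousOn <|
      (hx.2.1.abs.rpow_const fun _ _ => Or.inr hpq.nonneg).mul
        (continuousOn_id.rpow_const fun t ht => Or.inl (zero_lt_one.trans_le ht.1).ne')
  rw [one_div p, ENNReal.rpow_inv_le_iff hpq.pos]
  calc ∫⁻ x, ENNReal.ofReal (|U 1 x| ^ p) ∂ν = ∫⁻ x, ‖U 1 x‖ₑ ^ p ∂ν := by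
        simp only [Real.enorm_eq_ofReal_abs,
          ENNReal.ofReal_rpow_of_nonneg (abs_nonneg _) hpq.nonneg]
    _ ≤ ∫⁻ x, (A ^ (1 / q)) ^ p * (∫⁻ t in Icc 1 T, F t x) ∂ν := by
        refine lintegral_mono_ae (hpointwise.mono fun x hx => ?_)
        rw [← ENNReal.rpow_inv_rpow hpq.ne_zero (∫⁻ t in Icc 1 T, F t x),
          ← ENNReal.mul_rpow_of_nonneg _ _ hpq.nonneg, ← one_div]
        gcongr
    _ = (A ^ (1 / q)) ^ p * ∫⁻ x, (∫⁻ t in Icc 1 T, F t x) ∂ν :=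
        lintegral_const_mul'' _ hF.lintegral_prod_left'.aemeasurable
    _ ≤ (A ^ (1 / q)) ^ p * ∫⁻ t in Icc 1 T, ∫⁻ x, F t x ∂ν := by gcongr
    _ = _ := by rw [ENNReal.mul_rpow_of_nonneg _ _ hpq.nonneg, ENNReal.rpow_inv_rpow hpq.ne_zero]

/-- Minkowski + Hölder estimate (eq_u_eta_prel): if for `ν`-a.e. `x` the function
`t ↦ U t x` is `C¹` on `[1,T]` with derivative `U' t x` and `U T x = 0`, then
`‖U 1 ·‖_{L^p(ν)} ≤ (∫₁^T t^{−l p'/p} dt)^{1/p'} (∫₁^T ∫ |U'|^p t^l dν dt)^{1/p}`,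
where `p' = p/(p−1)` is the conjugate exponent. -/
theorem stmt7 {N : Type*} [MeasurableSpace N] (ν : Measure N)
    (p : ℝ) (hp : 1 < p) (T l : ℝ) (hT : 1 < T) (hl : 0 ≤ l)
    (U U' : ℝ → N → ℝ)
    (hUmeas : Measurable (Function.uncurry U))
    (hU'meas : Measurable (Function.uncurry U'))
    (hder : ∀ᵐ x ∂ν,
      (∀ t ∈ Set.Icc (1 : ℝ) T,
        HasDerivWithinAt (fun s => U s x) (U' t x) (Set.Icc (1 : ℝ) T) t) ∧
      ContinuousOn (fun t => U' t x) (Set.Icc (1 : ℝ) T) ∧ U T x = 0) :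
    (∫⁻ x, ENNReal.ofReal (|U 1 x| ^ p) ∂ν) ^ (1 / p) ≤
      (∫⁻ t in Set.Icc (1 : ℝ) T,
          ENNReal.ofReal (t ^ (-(l * (p / (p - 1))) / p))) ^ (1 / (p / (p - 1))) *
        (∫⁻ t in Set.Icc (1 : ℝ) T,
          ∫⁻ x, ENNReal.ofReal (|U' t x| ^ p * t ^ l) ∂ν) ^ (1 / p) :=
  stmt7_general ν p hp T l hT U U' hU'meas hder
end
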